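/- arXiv:math-ph/0311004 — 8 statements merged into one kernel-verified Lean document; each statement's English description precedes it below -/
import Mathlib

section
/- For fixed t ≥ 0, the function a ↦ (t^a − a·t + a − 1)/(a − 1) is monotone increasing on (0,1). -/
lemma Ft_convexOn (t : ℝ) (ht : 0 < t) :
    ConvexOn ℝ Set.univ (fun a : ℝ => t ^ a - a * t + a - 1) := by
  constructor
  · exact convex_univ
  · intro x _ y _ a b ha hb hab
    simp only [smul_eq_mul]
    have key := convexOn_exp.2 (Set.mem_univ (x * Real.log t))
      (Set.mem_univ (y * Real.log t)) ha hb hab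
    simp only [smul_eq_mul] at key
    have hx : t ^ x = Real.exp (x * Real.log t) := by
      rw [Real.rpow_def_of_pos ht]; ring_nf
    have hy : t ^ y = Real.exp (y * Real.log t) := by
      rw [Real.rpow_def_of_pos ht]; ring_nf
    have hxy : t ^ (a * x + b * y) = Real.exp ((a * x + b * y) * Real.log t) := by
      rw [Real.rpow_def_of_pos ht]; ring_nf
    have harg : (a * x + b * y) * Real.log t
        = a * (x * Real.log t) + b * (y * Real.log t) := by ring
    rw [hx, hy, hxy, harg]
    nlinarith [key]

/-- For fixed `t ≥ 0`, the function `a ↦ (t^a − a·t + a − 1)/(a − 1)` is monotone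
increasing on `(0,1)`. -/
theorem Ft_div_monotoneOn (t : ℝ) (ht : 0 ≤ t) :
    MonotoneOn (fun a : ℝ => (t ^ a - a * t + a - 1) / (a - 1))
      (Set.Ioo (0 : ℝ) 1) := by
  rcases eq_or_lt_of_le ht with rfl | ht
  · intro x hx y hy _
    have h1 : ((0:ℝ) ^ x - x * 0 + x - 1) / (x - 1) = 1 := by
      rw [Real.zero_rpow (ne_of_gt hx.1),
        div_eq_one_iff_eq (sub_ne_zero_of_ne (ne_of_lt hx.2))]; ring
    have h2 : ((0:ℝ) ^ y - y * 0 + y - 1) / (y - 1) = 1 := by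
      rw [Real.zero_rpow (ne_of_gt hy.1),
        div_eq_one_iff_eq (sub_ne_zero_of_ne (ne_of_lt hy.2))]; ring
    exact le_of_eq (h1.trans h2.symm)
  · intro x hx y hy hxy
    have hF := Ft_convexOn t ht
    have h := hF.secant_mono (a := 1) (Set.mem_univ 1) (Set.mem_univ x)
      (Set.mem_univ y) (ne_of_lt hx.2) (ne_of_lt hy.2) hxy
    have hF1 : t ^ (1:ℝ) - 1 * t + 1 - 1 = 0 := by
      rw [Real.rpow_one]; ring
    simpa [hF1] using h
end

section
/- Let −1 < α ≤ β < 1, set p = 2/(1−α), p' = 2/(1−β), with conjugate exponents q, q'. Then for every t ≥ 0, (1/p')·g_{p'}(t) ≤ (1/p)·g_p(t), where g_p(t) = p + q·t − p·q·t^{1/p}. -/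
/-!
Put `a = 1/p`. Since `q = p/(p-1)`, one has `(1/p)·g_p(t) = 1 - t + (t^a - t)/(a - 1)`, where the
last term is the slope of the secant of the convex function `s ↦ t^s` between `a` and `1`.
Such slopes increase with `a`, and `1/p' ≤ 1/p` because `α ≤ β`.
-/

open Set

lemma convexOn_Ioi_rpow_left {t : ℝ} (ht : 0 ≤ t) : ConvexOn ℝ (Ioi 0) (fun s : ℝ => t ^ s) := by
  rcases ht.eq_or_lt with rfl | ht
  · exact (convexOn_const 0 (convex_Ioi 0)).congr fun s hs => (Real.zero_rpow hs.ne').symm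
  · exact (convexOn_rpow_left ht).subset (subset_univ _) (convex_Ioi 0)

lemma one_div_mul_gp_eq_secant {p q : ℝ} (hp₀ : p ≠ 0) (hp₁ : p ≠ 1) (hpq : 1 / p + 1 / q = 1)
    (t : ℝ) :
    1 / p * (p + q * t - p * q * t ^ (1 / p)) = 1 - t + (t ^ (1 / p) - t) / (1 / p - 1) := by
  have hp₁' : p - 1 ≠ 0 := sub_ne_zero.mpr hp₁
  have hq : q = p / (p - 1) := by
    have hq₀ : q ≠ 0 := by
      rintro rfl
      simp only [div_zero, add_zero, div_eq_one_iff_eq hp₀] at hpq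
      exact hp₁ hpq.symm
    field_simp at hpq
    rw [eq_div_iff hp₁']
    linear_combination -hpq
  subst hq
  have hinv₁ : 1 / p - 1 ≠ 0 := by
    rw [one_div, sub_ne_zero, Ne, inv_eq_one]
    exact hp₁
  field_simp
  ring

/-- For `−1 < α ≤ β < 1`, with `p = 2/(1−α)`, `p' = 2/(1−β)` and their Hölder
conjugates `q, q'`, one has `(1/p')·g_{p'}(t) ≤ (1/p)·g_p(t)` for all `t ≥ 0`,
where `g_p(t) = p + q·t − p·q·t^(1/p)`. -/
theorem gp_comparison (α β p p' q q' : ℝ)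
    (hα : -1 < α) (hαβ : α ≤ β) (hβ : β < 1)
    (hp : p = 2 / (1 - α)) (hp' : p' = 2 / (1 - β))
    (hq : 1 / p + 1 / q = 1) (hq' : 1 / p' + 1 / q' = 1)
    (t : ℝ) (ht : 0 ≤ t) :
    (1 / p') * (p' + q' * t - p' * q' * t ^ (1 / p')) ≤
      (1 / p) * (p + q * t - p * q * t ^ (1 / p)) := by
  have ha : 1 / p = (1 - α) / 2 := by rw [hp, one_div_div]
  have hb : 1 / p' = (1 - β) / 2 := by rw [hp', one_div_div]
  have ha₀ : 0 < 1 / p := by rw [ha]; linarith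
  have hb₀ : 0 < 1 / p' := by rw [hb]; linarith
  have ha₁ : 1 / p ≠ 1 := by rw [ha]; linarith
  have hb₁ : 1 / p' ≠ 1 := by rw [hb]; linarith
  rw [one_div_mul_gp_eq_secant (one_div_pos.mp ha₀).ne' (fun h => ha₁ (by rw [h, div_one])) hq,
    one_div_mul_gp_eq_secant (one_div_pos.mp hb₀).ne' (fun h => hb₁ (by rw [h, div_one])) hq']
  have hslope := (convexOn_Ioi_rpow_left ht).secant_mono (mem_Ioi.mpr one_pos) hb₀ ha₀ hb₁ ha₁
    (by rw [ha, hb]; linarith)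
  simpa only [Real.rpow_one, add_le_add_iff_left] using hslope
end

section
/- In the same setting, D_p(x,y) ≥ ‖y/p‖^p · f_p(‖x‖/‖y‖) for all x, y ∈ X with y ≠ 0, where f_p(t) = p + q·t^p − p·q·t. In particular D_p(x,y) ≥ 0, with equality if and only if x = y, provided X is strictly convex. -/
/-!
`D_p(x, y)` is the Fenchel–Young gap `Ψ_p(x) + Ψ_q(ỹ) - ỹ(x)` (`Ψ_q` is the convex conjugate of
`Ψ_p`). Since `‖ỹ‖ = q‖y/p‖^(p-1)` and `Ψ_q(ỹ) = ‖y/p‖^p`, it splits exactly as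
`‖y/p‖^p · f_p(‖x‖/‖y‖) + (‖ỹ‖‖x‖ - ỹ(x))`, a sum of two nonnegative terms: the first by
Bernoulli's inequality, which also shows `f_p(t) = 0` only at `t = 1`. So `D_p(x, y) = 0` forces
`‖x‖ = ‖y‖` and `ỹ(x) = ‖ỹ‖‖x‖`; as also `ỹ(y) = ‖ỹ‖‖y‖`, we get `‖x + y‖ = ‖x‖ + ‖y‖`, which in a
strictly convex space means `x = y`.
-/

open Real

noncomputable def divergenceProfile (p q t : ℝ) : ℝ := p + q * t ^ p - p * q * t

namespace Real.HolderConjugate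

variable {p q : ℝ} (hpq : p.HolderConjugate q)
include hpq

theorem rpow_sub_one_rpow {r : ℝ} (hr : 0 ≤ r) : (r ^ (p - 1)) ^ q = r ^ p := by
  rw [← rpow_mul hr, hpq.sub_one_mul_conj]

theorem mul_rpow_eq_rpow_sub_one_mul {b : ℝ} (hb : 0 < b) :
    p * q * (b / p) ^ p = q * (b / p) ^ (p - 1) * b := by
  have hbp : 0 < b / p := div_pos hb hpq.pos
  rw [rpow_sub_one hbp.ne']
  field_simp

theorem rpow_mul_divergenceProfile {a b : ℝ} (ha : 0 ≤ a) (hb : 0 < b) :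
    (b / p) ^ p * divergenceProfile p q (a / b)
      = q * (a / p) ^ p + p * (b / p) ^ p - q * (b / p) ^ (p - 1) * a := by
  have hscale : (b / p) ^ p * (a / b) ^ p = (a / p) ^ p := by
    rw [← mul_rpow (div_pos hb hpq.pos).le (div_nonneg ha hb.le)]
    congr 1
    field_simp
  have hlin : p * q * (b / p) ^ p * (a / b) = q * (b / p) ^ (p - 1) * a := by
    rw [hpq.mul_rpow_eq_rpow_sub_one_mul hb]
    field_simp
  rw [divergenceProfile]
  linear_combination q * hscale - hlin

theorem divergenceProfile_nonneg {t : ℝ} (ht : 0 ≤ t) : 0 ≤ divergenceProfile p q t := by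
  have hbernoulli : 1 + p * (t - 1) ≤ t ^ p := by
    simpa using one_add_mul_self_le_rpow_one_add (by linarith : (-1 : ℝ) ≤ t - 1) hpq.lt.le
  have := mul_le_mul_of_nonneg_left hbernoulli hpq.symm.nonneg
  rw [divergenceProfile]
  linarith [hpq.mul_eq_add]

theorem divergenceProfile_eq_zero_iff {t : ℝ} (ht : 0 ≤ t) :
    divergenceProfile p q t = 0 ↔ t = 1 := by
  refine ⟨fun h => ?_, ?_⟩
  · by_contra ht1
    have hbernoulli : 1 + p * (t - 1) < t ^ p := by
      simpa using one_add_mul_self_lt_rpow_one_add (by linarith : (-1 : ℝ) ≤ t - 1)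
        (sub_ne_zero.2 ht1) hpq.lt
    have := mul_lt_mul_of_pos_left hbernoulli hpq.symm.pos
    rw [divergenceProfile] at h
    linarith [hpq.mul_eq_add]
  · rintro rfl
    rw [divergenceProfile, one_rpow]
    linarith [hpq.mul_eq_add]

end Real.HolderConjugate

theorem ContinuousLinearMap.apply_le_opNorm_mul_norm {X : Type*} [SeminormedAddCommGroup X]
    [NormedSpace ℝ X] (φ : X →L[ℝ] ℝ) (x : X) : φ x ≤ ‖φ‖ * ‖x‖ :=
  (le_norm_self _).trans (φ.le_opNorm x)

section StrictConvex

variable {X : Type*} [NormedAddCommGroup X] [NormedSpace ℝ X] [StrictConvexSpace ℝ X]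

theorem eq_of_apply_eq_opNorm_mul_norm {φ : X →L[ℝ] ℝ} (hφ : φ ≠ 0) {x y : X}
    (hx : φ x = ‖φ‖ * ‖x‖) (hy : φ y = ‖φ‖ * ‖y‖) (hxy : ‖x‖ = ‖y‖) : x = y := by
  refine eq_of_norm_eq_of_norm_add_eq hxy (le_antisymm (norm_add_le x y) ?_)
  have : ‖φ‖ * (‖x‖ + ‖y‖) ≤ ‖φ‖ * ‖x + y‖ := by
    rw [mul_add, ← hx, ← hy, ← map_add]
    exact φ.apply_le_opNorm_mul_norm _
  exact le_of_mul_le_mul_left this (norm_pos_iff.2 hφ)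

end StrictConvex

section YoungGap

variable {X : Type*} [NormedAddCommGroup X] [NormedSpace ℝ X]

noncomputable def youngGap (p q : ℝ) (x : X) (φ : X →L[ℝ] ℝ) : ℝ :=
  q * (‖x‖ / p) ^ p + p * (‖φ‖ / q) ^ q - φ x

variable {p q : ℝ} (hpq : p.HolderConjugate q) {x y : X} {φ : X →L[ℝ] ℝ}
include hpq

theorem youngGap_zero_right : youngGap p q x 0 = q * (‖x‖ / p) ^ p := by
  simp [youngGap, zero_rpow hpq.symm.ne_zero]

theorem youngGap_zero_right_eq_zero_iff : youngGap p q x 0 = 0 ↔ x = 0 := by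
  have hp : 0 < p := hpq.pos
  rw [youngGap_zero_right hpq, mul_eq_zero, rpow_eq_zero (by positivity) hp.ne', div_eq_zero_iff,
    norm_eq_zero]
  simp [hpq.symm.ne_zero, hp.ne']

theorem youngGap_eq (hy : y ≠ 0) (hφ : ‖φ‖ = q * (‖y‖ / p) ^ (p - 1)) :
    youngGap p q x φ
      = (‖y‖ / p) ^ p * divergenceProfile p q (‖x‖ / ‖y‖) + (‖φ‖ * ‖x‖ - φ x) := by
  have hdual : (‖φ‖ / q) ^ q = (‖y‖ / p) ^ p := by
    rw [hφ, mul_div_cancel_left₀ _ hpq.symm.ne_zero,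
      hpq.rpow_sub_one_rpow (div_nonneg (norm_nonneg y) hpq.nonneg)]
  rw [youngGap, hdual, hpq.rpow_mul_divergenceProfile (norm_nonneg x) (norm_pos_iff.2 hy), hφ]
  ring

theorem youngGap_nonneg (hy : y ≠ 0) (hφ : ‖φ‖ = q * (‖y‖ / p) ^ (p - 1)) :
    0 ≤ youngGap p q x φ := by
  rw [youngGap_eq hpq hy hφ]
  exact add_nonneg
    (mul_nonneg (rpow_nonneg (div_nonneg (norm_nonneg y) hpq.nonneg) p)
      (hpq.divergenceProfile_nonneg (div_nonneg (norm_nonneg x) (norm_nonneg y))))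
    (sub_nonneg.2 (φ.apply_le_opNorm_mul_norm x))

theorem youngGap_eq_zero_iff [StrictConvexSpace ℝ X] (hy : y ≠ 0)
    (hφ : ‖φ‖ = q * (‖y‖ / p) ^ (p - 1)) (hφy : φ y = ‖φ‖ * ‖y‖) :
    youngGap p q x φ = 0 ↔ x = y := by
  have hyn : 0 < ‖y‖ := norm_pos_iff.2 hy
  have ht : 0 ≤ ‖x‖ / ‖y‖ := div_nonneg (norm_nonneg x) hyn.le
  rw [youngGap_eq hpq hy hφ]
  refine ⟨fun h => ?_, ?_⟩
  · have hb : 0 < (‖y‖ / p) ^ p := rpow_pos_of_pos (div_pos hyn hpq.pos) p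
    obtain ⟨hprofile, hdefect⟩ := (add_eq_zero_iff_of_nonneg
      (mul_nonneg hb.le (hpq.divergenceProfile_nonneg ht))
      (sub_nonneg.2 (φ.apply_le_opNorm_mul_norm x))).1 h
    have hxy : ‖x‖ = ‖y‖ := (div_eq_one_iff_eq hyn.ne').1
      ((hpq.divergenceProfile_eq_zero_iff ht).1 ((mul_eq_zero.1 hprofile).resolve_left hb.ne'))
    have hφ0 : φ ≠ 0 :=
      norm_pos_iff.1 (hφ ▸ mul_pos hpq.symm.pos (rpow_pos_of_pos (div_pos hyn hpq.pos) _))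
    exact eq_of_apply_eq_opNorm_mul_norm hφ0 (sub_eq_zero.1 hdefect).symm hφy hxy
  · rintro rfl
    rw [div_self hyn.ne', (hpq.divergenceProfile_eq_zero_iff zero_le_one).2 rfl, hφy]
    ring

end YoungGap

theorem divergence_lower_bound_general (X : Type*) [NormedAddCommGroup X] [NormedSpace ℝ X]
    [StrictConvexSpace ℝ X]
    (p q : ℝ) (hp : 1 < p) (hpq : 1 / p + 1 / q = 1)
    (T : X → (X →L[ℝ] ℝ)) (hT0 : T 0 = 0)
    (hTnorm : ∀ x : X, x ≠ 0 → ‖T x‖ = q * (‖x‖ / p) ^ (p - 1))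
    (hTxx : ∀ x : X, T x x = p * q * (‖x‖ / p) ^ p)
    (D : X → X → ℝ)
    (hD : ∀ x y : X, D x y = q * (‖x‖ / p) ^ p + p * (‖T y‖ / q) ^ q - T y x) :
    (∀ x y : X, y ≠ 0 →
      (‖y‖ / p) ^ p * (p + q * (‖x‖ / ‖y‖) ^ p - p * q * (‖x‖ / ‖y‖)) ≤ D x y) ∧
    (∀ x y : X, 0 ≤ D x y ∧ (D x y = 0 ↔ x = y)) := by
  have hconj : p.HolderConjugate q :=
    holderConjugate_iff.2 ⟨hp, by simpa only [one_div] using hpq⟩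
  have hD' : ∀ x y, D x y = youngGap p q x (T y) := hD
  refine ⟨fun x y hy => ?_, fun x y => ?_⟩
  · change (‖y‖ / p) ^ p * divergenceProfile p q (‖x‖ / ‖y‖) ≤ D x y
    rw [hD', youngGap_eq hconj hy (hTnorm y hy)]
    linarith [(T y).apply_le_opNorm_mul_norm x]
  rcases eq_or_ne y 0 with rfl | hy
  · rw [hD', hT0, youngGap_zero_right_eq_zero_iff hconj, youngGap_zero_right hconj]
    exact ⟨mul_nonneg hconj.symm.nonneg (rpow_nonneg (div_nonneg (norm_nonneg x) hconj.nonneg) p),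
      Iff.rfl⟩
  · have hTy : T y y = ‖T y‖ * ‖y‖ := by
      rw [hTxx, hTnorm y hy, hconj.mul_rpow_eq_rpow_sub_one_mul (norm_pos_iff.2 hy)]
    rw [hD']
    exact ⟨youngGap_nonneg hconj hy (hTnorm y hy),
      youngGap_eq_zero_iff hconj hy (hTnorm y hy) hTy⟩

/-- Lower bound and positivity for the divergence `D_p`.  For all `x, y` with
`y ≠ 0`, `D_p(x,y) ≥ ‖y/p‖^p · f_p(‖x‖/‖y‖)` where `f_p(t) = p + q·t^p − p·q·t`;
and (with `X` strictly convex) `D_p(x,y) ≥ 0` with equality iff `x = y`. -/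
theorem divergence_lower_bound (X : Type*) [NormedAddCommGroup X] [NormedSpace ℝ X]
    [CompleteSpace X] [StrictConvexSpace ℝ X]
    (p q : ℝ) (hp : 1 < p) (hpq : 1 / p + 1 / q = 1)
    (hnorm : ∀ x : X, x ≠ 0 → DifferentiableAt ℝ (fun y : X => ‖y‖) x)
    (T : X → (X →L[ℝ] ℝ)) (hT0 : T 0 = 0)
    (hTnorm : ∀ x : X, x ≠ 0 → ‖T x‖ = q * (‖x‖ / p) ^ (p - 1))
    (hTxx : ∀ x : X, T x x = p * q * (‖x‖ / p) ^ p)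
    (D : X → X → ℝ)
    (hD : ∀ x y : X, D x y = q * (‖x‖ / p) ^ p + p * (‖T y‖ / q) ^ q - T y x) :
    (∀ x y : X, y ≠ 0 →
      (‖y‖ / p) ^ p * (p + q * (‖x‖ / ‖y‖) ^ p - p * q * (‖x‖ / ‖y‖)) ≤ D x y) ∧
    (∀ x y : X, 0 ≤ D x y ∧ (D x y = 0 ↔ x = y)) :=
  divergence_lower_bound_general X p q hp hpq T hT0 hTnorm hTxx D hD
end

section
/- In the same setting, for any y ∈ X and d > 0, the sublevel set U_{y,d} = { x ∈ X : D_p(x,y) ≤ d } is convex, norm-bounded, and weakly closed. -/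
set_option maxHeartbeats 1000000


/-- The sublevel set `U_{y,d} = {x : D_p(x,y) ≤ d}` of the divergence is convex,
norm-bounded and weakly closed. -/
theorem sublevel_convex_bounded_weakly_closed
    (X : Type*) [NormedAddCommGroup X] [NormedSpace ℝ X]
    [CompleteSpace X] [UniformConvexSpace X]
    (p q : ℝ) (hp : 1 < p) (hpq : 1 / p + 1 / q = 1)
    (hnorm : ∀ x : X, x ≠ 0 → DifferentiableAt ℝ (fun y : X => ‖y‖) x)
    (T : X → (X →L[ℝ] ℝ)) (hT0 : T 0 = 0)
    (hTnorm : ∀ x : X, x ≠ 0 → ‖T x‖ = q * (‖x‖ / p) ^ (p - 1))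
    (hTxx : ∀ x : X, T x x = p * q * (‖x‖ / p) ^ p)
    (D : X → X → ℝ)
    (hD : ∀ x y : X, D x y = q * (‖x‖ / p) ^ p + p * (‖T y‖ / q) ^ q - T y x)
    (y : X) (d : ℝ) (hd : 0 < d) :
    Convex ℝ {x : X | D x y ≤ d} ∧
    Bornology.IsBounded {x : X | D x y ≤ d} ∧
    IsClosed (toWeakSpace ℝ X '' {x : X | D x y ≤ d}) := by
  have hp0 : (0:ℝ) < p := by linarith
  have hp1 : 1 / p < 1 := by rw [div_lt_one hp0]; exact hp
  have hq0 : (0:ℝ) < q := by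
    have : 0 < 1 / q := by linarith
    exact one_div_pos.mp this
  -- monotonicity and convexity of φ t = (t/p)^p on [0, ∞)
  have hφmono : ∀ s t : ℝ, 0 ≤ s → s ≤ t → (s / p) ^ p ≤ (t / p) ^ p := fun s t hs hst =>
    Real.rpow_le_rpow (div_nonneg hs hp0.le) (by
      exact div_le_div_of_nonneg_right hst hp0.le) hp0.le
  have hconv : Convex ℝ {x : X | D x y ≤ d} := by
    intro x₁ hx₁ x₂ hx₂ a b ha hb hab
    simp only [Set.mem_setOf_eq, hD] at hx₁ hx₂ ⊢
    have hnle : ‖a • x₁ + b • x₂‖ ≤ a * ‖x₁‖ + b * ‖x₂‖ := by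
      calc ‖a • x₁ + b • x₂‖ ≤ ‖a • x₁‖ + ‖b • x₂‖ := norm_add_le _ _
        _ = a * ‖x₁‖ + b * ‖x₂‖ := by
            rw [norm_smul, norm_smul, Real.norm_eq_abs, Real.norm_eq_abs,
              abs_of_nonneg ha, abs_of_nonneg hb]
    have h1 : (‖a • x₁ + b • x₂‖ / p) ^ p ≤ ((a * ‖x₁‖ + b * ‖x₂‖) / p) ^ p :=
      hφmono _ _ (norm_nonneg _) hnle
    have h2 : ((a * ‖x₁‖ + b * ‖x₂‖) / p) ^ p ≤ a * (‖x₁‖ / p) ^ p + b * (‖x₂‖ / p) ^ p := by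
      have := (convexOn_rpow hp.le).2 (Set.mem_Ici.mpr (div_nonneg (norm_nonneg x₁) hp0.le))
        (Set.mem_Ici.mpr (div_nonneg (norm_nonneg x₂) hp0.le)) ha hb hab
      simp only [smul_eq_mul] at this
      calc ((a * ‖x₁‖ + b * ‖x₂‖) / p) ^ p
          = (a * (‖x₁‖ / p) + b * (‖x₂‖ / p)) ^ p := by ring_nf
        _ ≤ a * (‖x₁‖ / p) ^ p + b * (‖x₂‖ / p) ^ p := this
    have hlin : T y (a • x₁ + b • x₂) = a * T y x₁ + b * T y x₂ := by
      simp [map_add, map_smul]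
    have hphi : (‖a • x₁ + b • x₂‖ / p) ^ p ≤ a * (‖x₁‖ / p) ^ p + b * (‖x₂‖ / p) ^ p :=
      h1.trans h2
    have hmul := mul_le_mul_of_nonneg_left hphi hq0.le
    rw [hlin]
    have e1 : a * (p * (‖T y‖ / q) ^ q) + b * (p * (‖T y‖ / q) ^ q) = p * (‖T y‖ / q) ^ q := by
      rw [← add_mul, hab, one_mul]
    have e2 : a * d + b * d = d := by rw [← add_mul, hab, one_mul]
    nlinarith [mul_le_mul_of_nonneg_left hx₁ ha, mul_le_mul_of_nonneg_left hx₂ hb, hmul, e1, e2]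
  refine ⟨hconv, ?_, ?_⟩
  · -- boundedness
    rw [isBounded_iff_forall_norm_le]
    set A : ℝ := ‖T y‖ with hA
    set M : ℝ := ((A + 1) * p ^ p / q) ^ (p - 1)⁻¹ with hM
    have hMnn : 0 ≤ (A + 1) * p ^ p / q := by positivity
    refine ⟨max 1 (max M d), fun x hx => ?_⟩
    by_contra hcon
    push_neg at hcon
    set t : ℝ := ‖x‖ with ht
    have ht1 : 1 < t := lt_of_le_of_lt (le_max_left _ _) hcon
    have htM : M < t := lt_of_le_of_lt ((le_max_left _ _).trans (le_max_right _ _)) hcon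
    have htd : d < t := lt_of_le_of_lt ((le_max_right _ _).trans (le_max_right _ _)) hcon
    have ht0 : 0 < t := by linarith
    -- from membership
    have hxD : q * (t / p) ^ p + p * (‖T y‖ / q) ^ q - T y x ≤ d := by
      have := hx; simp only [Set.mem_setOf_eq, hD] at this; exact this
    have hTyx : T y x ≤ A * t := by
      calc T y x ≤ |T y x| := le_abs_self _
        _ = ‖T y x‖ := rfl
        _ ≤ ‖T y‖ * ‖x‖ := (T y).le_opNorm x
    have hC : 0 ≤ p * (‖T y‖ / q) ^ q := by positivity
    have hkey : q * (t / p) ^ p ≤ d + A * t := by linarith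
    -- lower bound on q * (t/p)^p
    have hMt : (A + 1) * p ^ p / q ≤ t ^ (p - 1) := by
      have : M ^ (p - 1) ≤ t ^ (p - 1) :=
        Real.rpow_le_rpow (Real.rpow_nonneg hMnn _) htM.le (by linarith)
      rwa [hM, Real.rpow_inv_rpow hMnn (by intro h; apply absurd h; intro h'; linarith)] at this
    have htp : t ^ p = t ^ (p - 1) * t := by
      rw [← Real.rpow_add_one ht0.ne' (p - 1)]; ring_nf
    have hlow : (A + 1) * t ≤ q * (t / p) ^ p := by
      have hppos : (0:ℝ) < p ^ p := Real.rpow_pos_of_pos hp0 p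
      rw [Real.div_rpow ht0.le hp0.le, htp]
      rw [div_le_iff₀ hq0] at hMt
      calc (A + 1) * t ≤ t ^ (p - 1) * q / p ^ p * t := by
            rw [div_mul_eq_mul_div, le_div_iff₀ hppos]
            calc (A + 1) * t * p ^ p = (A + 1) * p ^ p * t := by ring
              _ ≤ t ^ (p - 1) * q * t := by
                  exact mul_le_mul_of_nonneg_right hMt ht0.le
              _ = t ^ (p - 1) * t * q * 1 := by ring
              _ ≤ t ^ (p - 1) * t * q * 1 := le_rfl
              _ = t ^ (p - 1) * q * t := by ring
        _ = q * (t ^ (p - 1) * t / p ^ p) := by ring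
    have : (A + 1) * t ≤ d + A * t := hlow.trans hkey
    nlinarith
  · -- weak closedness
    have hcont : Continuous fun x : X => D x y := by
      have h1 : Continuous fun x : X => (‖x‖ / p) ^ p := by
        apply Continuous.rpow_const
        · exact continuous_norm.div_const p
        · intro x; exact Or.inr hp0.le
      simp only [hD]
      exact ((continuous_const.mul h1).add continuous_const).sub (T y).continuous
    have hclosed : IsClosed {x : X | D x y ≤ d} :=
      isClosed_le hcont continuous_const
    have h := hconv.toWeakSpace_closure ℝ
    rw [hclosed.closure_eq] at h
    rw [h]
    exact isClosed_closure
end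

section
/- In the same setting, the set U_{y,d} = { x ∈ X : D_p(x,y) ≤ d } contains no half-line: for every x ∈ X and h ≠ 0 there exists t ≥ 0 with x + t·h ∉ U_{y,d}. -/
/-!
Since `T y` is a bounded functional, `D z y ≥ q (‖z‖/p)^p - ‖T y‖ ‖z‖`, and the right-hand side
grows superlinearly in `‖z‖` because `p > 1`. Along a half-line `x + t • h` with `h ≠ 0` the norm
tends to infinity, so `D (x + t • h) y` eventually exceeds `d`.
-/

open Filter

lemma tendsto_mul_rpow_sub_mul_atTop {c p : ℝ} (hc : 0 < c) (hp : 1 < p) (M : ℝ) :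
    Tendsto (fun r : ℝ => c * r ^ p - M * r) atTop atTop := by
  have hfactor : Tendsto (fun r : ℝ => c * r ^ (p - 1) - M) atTop atTop :=
    tendsto_atTop_add_const_right _ _ ((tendsto_rpow_atTop (by linarith)).const_mul_atTop hc)
  refine (tendsto_id.atTop_mul_atTop₀ hfactor).congr' ?_
  filter_upwards [eventually_gt_atTop 0] with r hr
  rw [id, mul_sub, Real.rpow_sub_one hr.ne']
  field_simp

lemma tendsto_norm_add_smul_atTop {E : Type*} [NormedAddCommGroup E] [NormedSpace ℝ E]
    (x : E) {h : E} (hh : h ≠ 0) : Tendsto (fun t : ℝ => ‖x + t • h‖) atTop atTop := by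
  refine tendsto_atTop_mono (fun t => ?_) (tendsto_atTop_add_const_right _ (-‖x‖)
    (tendsto_id.atTop_mul_const (norm_pos_iff.2 hh)))
  have hsmul : t * ‖h‖ ≤ ‖t • h‖ := by
    rw [norm_smul]
    exact mul_le_mul_of_nonneg_right (Real.le_norm_self t) (norm_nonneg h)
  have htriangle : ‖t • h‖ ≤ ‖x + t • h‖ + ‖x‖ := by
    simpa using norm_sub_le (x + t • h) x
  simp only [id]
  linarith

theorem sublevel_no_halfline_general
    (X : Type*) [NormedAddCommGroup X] [NormedSpace ℝ X]
    (p q : ℝ) (hp : 1 < p) (hpq : 1 / p + 1 / q = 1)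
    (T : X → (X →L[ℝ] ℝ))
    (D : X → X → ℝ)
    (hD : ∀ x y : X, D x y = q * (‖x‖ / p) ^ p + p * (‖T y‖ / q) ^ q - T y x)
    (y : X) (d : ℝ) :
    ∀ x h : X, h ≠ 0 → ∃ t : ℝ, 0 ≤ t ∧ x + t • h ∉ {z : X | D z y ≤ d} := by
  intro x h hh
  have hp0 : 0 < p := by linarith
  have hq0 : 0 < q := (Real.holderConjugate_iff.2 ⟨hp, by simpa using hpq⟩).symm.pos
  have hD_ge (z : X) : q * (‖z‖ / p) ^ p - ‖T y‖ * ‖z‖ ≤ D z y := by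
    have hTz : T y z ≤ ‖T y‖ * ‖z‖ := (Real.le_norm_self _).trans ((T y).le_opNorm z)
    have hconj : 0 ≤ p * (‖T y‖ / q) ^ q := by positivity
    rw [hD]
    linarith
  have hgrowth : Tendsto (fun r : ℝ => q * (r / p) ^ p - ‖T y‖ * r) atTop atTop := by
    refine ((tendsto_mul_rpow_sub_mul_atTop hq0 hp (‖T y‖ * p)).comp
      (tendsto_id.atTop_div_const hp0)).congr fun r => ?_
    simp only [Function.comp, id]
    field_simp
  have hray : Tendsto (fun t : ℝ => D (x + t • h) y) atTop atTop :=
    tendsto_atTop_mono (fun t => hD_ge _) (hgrowth.comp (tendsto_norm_add_smul_atTop x hh))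
  obtain ⟨t, ht0, htd⟩ := ((eventually_ge_atTop 0).and (hray.eventually_gt_atTop d)).exists
  exact ⟨t, ht0, not_le.2 htd⟩

/-- The sublevel set `U_{y,d}` of the divergence contains no half-line: for every
`x` and `h ≠ 0` there is `t ≥ 0` with `x + t·h ∉ U_{y,d}`. -/
theorem sublevel_no_halfline
    (X : Type*) [NormedAddCommGroup X] [NormedSpace ℝ X]
    [CompleteSpace X] [UniformConvexSpace X]
    (p q : ℝ) (hp : 1 < p) (hpq : 1 / p + 1 / q = 1)
    (hnorm : ∀ x : X, x ≠ 0 → DifferentiableAt ℝ (fun y : X => ‖y‖) x)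
    (T : X → (X →L[ℝ] ℝ)) (hT0 : T 0 = 0)
    (hTnorm : ∀ x : X, x ≠ 0 → ‖T x‖ = q * (‖x‖ / p) ^ (p - 1))
    (hTxx : ∀ x : X, T x x = p * q * (‖x‖ / p) ^ p)
    (D : X → X → ℝ)
    (hD : ∀ x y : X, D x y = q * (‖x‖ / p) ^ p + p * (‖T y‖ / q) ^ q - T y x)
    (y : X) (d : ℝ) (hd : 0 < d) :
    ∀ x h : X, h ≠ 0 → ∃ t : ℝ, 0 ≤ t ∧ x + t • h ∉ {z : X | D z y ≤ d} :=
  sublevel_no_halfline_general X p q hp hpq T D hD y d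
end

section
/- Let X be a real Banach space with differentiable norm, p, q > 1 conjugate, and D_p the associated divergence. Let C ⊆ X be convex, y ∈ X, and x_m ∈ C. Then the following are equivalent: (i) D_p(x_m, y) = inf_{x ∈ C} D_p(x, y); (ii) (ỹ − x̃_m)(x − x_m) ≤ 0 for all x ∈ C; (iii) D_p(x, y) ≥ D_p(x, x_m) + D_p(x_m, y) for all x ∈ C. -/
/-!
Since `x̃_m` attains the equality case `x̃_m(x_m) = q‖x_m/p‖^p + p‖x̃_m/q‖^q` of Young's
inequality, one has the three-point identity
`D_p(x,y) = D_p(x,x_m) + D_p(x_m,y) - (ỹ - x̃_m)(x - x_m)`, which gives (ii) ⇔ (iii);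
(iii) ⇒ (i) because `D_p ≥ 0` by Young's inequality. For (i) ⇒ (ii), `x̃_m` is the derivative
of `q‖·/p‖^p` at `x_m` (a functional attaining its norm at a point of differentiability of the
norm is a multiple of the derivative of the norm), so `x̃_m - ỹ` is the derivative of
`D_p(·,y)` at its minimiser `x_m` over `C`, and Fermat's rule on a convex set applies.
-/

open Filter Topology Asymptotics

section Potential

variable {X : Type*} [NormedAddCommGroup X] [NormedSpace ℝ X]

theorem hasFDerivAt_norm_rpow_zero {p : ℝ} (hp : 1 < p) :
    HasFDerivAt (fun x : X ↦ ‖x‖ ^ p) (0 : X →L[ℝ] ℝ) 0 := by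
  refine .of_isLittleO ?_
  have hsmall : Tendsto (fun x : X ↦ ‖x‖ ^ (p - 1)) (𝓝 0) (𝓝 0) := by
    simpa [Real.zero_rpow (sub_pos.2 hp).ne'] using
      (continuous_norm.tendsto (0 : X)).rpow_const (Or.inr (sub_pos.2 hp).le)
  have hsplit : (fun x : X ↦ ‖x‖ ^ p - ‖(0 : X)‖ ^ p - (0 : X →L[ℝ] ℝ) (x - 0))
      = fun x ↦ ‖x‖ ^ (p - 1) * ‖x‖ := by
    ext x
    rw [← Real.rpow_add_one' (norm_nonneg x) (by linarith)]
    simp [Real.zero_rpow (by linarith : p ≠ 0)]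
  rw [hsplit]
  exact isLittleO_norm_right.mp <| by
    simpa using ((isLittleO_one_iff ℝ).2 hsmall).mul_isBigO (isBigO_refl (fun x : X ↦ ‖x‖) _)

-- `‖ℓ‖ ‖·‖ - ℓ` is nonnegative and vanishes at `w`, so Fermat's rule applies.
theorem eq_norm_smul_of_hasFDerivAt_norm {ℓ g : X →L[ℝ] ℝ} {w : X}
    (hg : HasFDerivAt (fun x : X ↦ ‖x‖) g w) (hℓw : ℓ w = ‖ℓ‖ * ‖w‖) : ℓ = ‖ℓ‖ • g := by
  have hmin : IsLocalMin (fun x ↦ ‖ℓ‖ * ‖x‖ - ℓ x) w :=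
    IsMinOn.isLocalMin (fun x _ ↦ by
      simpa [hℓw] using ℓ.le_opNorm x |>.trans' (le_abs_self _)) univ_mem
  exact (sub_eq_zero.1 (hmin.hasFDerivAt_eq_zero ((hg.const_mul ‖ℓ‖).sub ℓ.hasFDerivAt))).symm

theorem hasFDerivAt_potential {p q : ℝ} (hpq : p.HolderConjugate q) {ℓ : X →L[ℝ] ℝ} {w : X}
    (hnorm : w ≠ 0 → DifferentiableAt ℝ (fun x : X ↦ ‖x‖) w)
    (hℓ : ‖ℓ‖ = q * (‖w‖ / p) ^ (p - 1)) (hℓw : ℓ w = p * q * (‖w‖ / p) ^ p) :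
    HasFDerivAt (fun x : X ↦ q * (‖x‖ / p) ^ p) ℓ w := by
  have hp0 := hpq.pos
  rcases eq_or_ne w 0 with rfl | hw
  · have hℓ0 : ℓ = 0 := by
      simpa [Real.zero_rpow (sub_pos.2 hpq.lt).ne'] using hℓ
    simp_rw [Real.div_rpow (norm_nonneg _) hp0.le, div_eq_mul_inv, hℓ0]
    simpa using ((hasFDerivAt_norm_rpow_zero (X := X) hpq.lt).mul_const (p ^ p)⁻¹).const_mul q
  · obtain ⟨g, hg⟩ := hnorm hw
    have hwp : 0 < ‖w‖ / p := by positivity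
    have hℓg : ℓ = ‖ℓ‖ • g := by
      refine eq_norm_smul_of_hasFDerivAt_norm hg ?_
      rw [hℓw, hℓ, Real.rpow_sub_one hwp.ne']
      field_simp
    simp_rw [div_eq_mul_inv]
    refine (((hg.mul_const p⁻¹).rpow_const (Or.inl (by positivity))).const_mul q).congr_fderiv ?_
    rw [hℓg, hℓ]
    ext u
    simp only [smul_apply, smul_eq_mul]
    field_simp

theorem apply_le_young {p q : ℝ} (hpq : p.HolderConjugate q) (ℓ : X →L[ℝ] ℝ) (x : X) :
    ℓ x ≤ q * (‖x‖ / p) ^ p + p * (‖ℓ‖ / q) ^ q := by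
  have hp0 := hpq.pos
  have hq0 := hpq.symm.pos
  calc ℓ x ≤ ‖ℓ‖ * ‖x‖ := (le_abs_self _).trans (ℓ.le_opNorm x)
    _ = p * q * (‖x‖ / p * (‖ℓ‖ / q)) := by field_simp
    _ ≤ p * q * ((‖x‖ / p) ^ p / p + (‖ℓ‖ / q) ^ q / q) := by
      gcongr
      exact Real.young_inequality_of_nonneg (by positivity) (by positivity) hpq
    _ = q * (‖x‖ / p) ^ p + p * (‖ℓ‖ / q) ^ q := by field_simp

theorem apply_self_eq_young {p q : ℝ} (hpq : p.HolderConjugate q) {ℓ : X →L[ℝ] ℝ} {w : X}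
    (hℓ : ‖ℓ‖ = q * (‖w‖ / p) ^ (p - 1)) (hℓw : ℓ w = p * q * (‖w‖ / p) ^ p) :
    ℓ w = q * (‖w‖ / p) ^ p + p * (‖ℓ‖ / q) ^ q := by
  have hℓq : (‖ℓ‖ / q) ^ q = (‖w‖ / p) ^ p := by
    rw [hℓ, mul_div_cancel_left₀ _ hpq.symm.ne_zero, ← Real.rpow_mul (by positivity [hpq.pos]),
      hpq.sub_one_mul_conj]
  rw [hℓw, hℓq, hpq.mul_eq_add]
  ring

theorem IsMinOn.apply_sub_nonneg_of_convex {f : X → ℝ} {f' : X →L[ℝ] ℝ} {C : Set X} {a x : X}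
    (hmin : IsMinOn f C a) (hf : HasFDerivAt f f' a) (hC : Convex ℝ C) (ha : a ∈ C)
    (hx : x ∈ C) : 0 ≤ f' (x - a) :=
  hmin.localize.hasFDerivWithinAt_nonneg hf.hasFDerivWithinAt
    (sub_mem_posTangentConeAt_of_segment_subset (hC.segment_subset ha hx))

end Potential

theorem projection_characterization_general
    (X : Type*) [NormedAddCommGroup X] [NormedSpace ℝ X]
    (p q : ℝ) (hp : 1 < p) (hpq : 1 / p + 1 / q = 1)
    (hnorm : ∀ x : X, x ≠ 0 → DifferentiableAt ℝ (fun y : X => ‖y‖) x)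
    (T : X → (X →L[ℝ] ℝ)) (hT0 : T 0 = 0)
    (hTnorm : ∀ x : X, x ≠ 0 → ‖T x‖ = q * (‖x‖ / p) ^ (p - 1))
    (hTxx : ∀ x : X, T x x = p * q * (‖x‖ / p) ^ p)
    (D : X → X → ℝ)
    (hD : ∀ x y : X, D x y = q * (‖x‖ / p) ^ p + p * (‖T y‖ / q) ^ q - T y x)
    (C : Set X) (hC : Convex ℝ C) (y : X) (xm : X) (hxm : xm ∈ C) :
    ((∀ x ∈ C, D xm y ≤ D x y) ↔ (∀ x ∈ C, (T y - T xm) (x - xm) ≤ 0)) ∧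
    ((∀ x ∈ C, (T y - T xm) (x - xm) ≤ 0) ↔
      (∀ x ∈ C, D x xm + D xm y ≤ D x y)) := by
  have hpq' : p.HolderConjugate q :=
    Real.holderConjugate_iff.mpr ⟨hp, by simpa only [one_div] using hpq⟩
  have hTnorm_all : ∀ w, ‖T w‖ = q * (‖w‖ / p) ^ (p - 1) := by
    intro w
    rcases eq_or_ne w 0 with rfl | hw
    · simp [hT0, Real.zero_rpow (sub_pos.2 hp).ne']
    · exact hTnorm w hw
  have three_point : ∀ x, D x y = D x xm + D xm y - (T y - T xm) (x - xm) := by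
    intro x
    have := apply_self_eq_young hpq' (hTnorm_all xm) (hTxx xm)
    simp only [hD, map_sub, sub_apply]
    linarith
  have min_imp_normal : (∀ x ∈ C, D xm y ≤ D x y) → ∀ x ∈ C, (T y - T xm) (x - xm) ≤ 0 := by
    intro hmin x hx
    have hderiv : HasFDerivAt (fun x ↦ D x y) (T xm - T y) xm := by
      simp_rw [hD]
      exact ((hasFDerivAt_potential hpq' (hnorm xm) (hTnorm_all xm) (hTxx xm)).add_const _).sub
        (T y).hasFDerivAt
    have := IsMinOn.apply_sub_nonneg_of_convex (f := fun x ↦ D x y) hmin hderiv hC hxm hx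
    simp only [sub_apply] at this ⊢
    linarith
  have normal_iff_pythagoras : (∀ x ∈ C, (T y - T xm) (x - xm) ≤ 0) ↔
      ∀ x ∈ C, D x xm + D xm y ≤ D x y :=
    forall₂_congr fun x _ ↦ by rw [three_point x]; constructor <;> intro <;> linarith
  have pythagoras_imp_min : (∀ x ∈ C, D x xm + D xm y ≤ D x y) → ∀ x ∈ C, D xm y ≤ D x y :=
    fun h x hx ↦ by linarith [h x hx, hD x xm, apply_le_young hpq' (T xm) x]
  exact ⟨⟨min_imp_normal, pythagoras_imp_min ∘ normal_iff_pythagoras.mp⟩, normal_iff_pythagoras⟩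

/-- Characterization of `D_p`-projections onto a convex set `C`: for `x_m ∈ C`,
minimality of `D_p(·,y)` at `x_m` is equivalent to `ỹ − x̃_m` lying in the normal
cone to `C` at `x_m`, and to the Pythagorean inequality
`D_p(x,y) ≥ D_p(x,x_m) + D_p(x_m,y)` for all `x ∈ C`. -/
theorem projection_characterization
    (X : Type*) [NormedAddCommGroup X] [NormedSpace ℝ X]
    [CompleteSpace X] [UniformConvexSpace X]
    (p q : ℝ) (hp : 1 < p) (hpq : 1 / p + 1 / q = 1)
    (hnorm : ∀ x : X, x ≠ 0 → DifferentiableAt ℝ (fun y : X => ‖y‖) x)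
    (T : X → (X →L[ℝ] ℝ)) (hT0 : T 0 = 0)
    (hTnorm : ∀ x : X, x ≠ 0 → ‖T x‖ = q * (‖x‖ / p) ^ (p - 1))
    (hTxx : ∀ x : X, T x x = p * q * (‖x‖ / p) ^ p)
    (D : X → X → ℝ)
    (hD : ∀ x y : X, D x y = q * (‖x‖ / p) ^ p + p * (‖T y‖ / q) ^ q - T y x)
    (C : Set X) (hC : Convex ℝ C) (y : X) (xm : X) (hxm : xm ∈ C) :
    ((∀ x ∈ C, D xm y ≤ D x y) ↔ (∀ x ∈ C, (T y - T xm) (x - xm) ≤ 0)) ∧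
    ((∀ x ∈ C, (T y - T xm) (x - xm) ≤ 0) ↔
      (∀ x ∈ C, D x xm + D xm y ≤ D x y)) :=
  projection_characterization_general X p q hp hpq hnorm T hT0 hTnorm hTxx D hD C hC y xm hxm
end

section
/- In the same setting, if x₁ and x₂ are both points of a convex set C satisfying D_p(x, y) ≥ D_p(x, x_i) + D_p(x_i, y) for all x ∈ C (i = 1,2), then x₁ = x₂. That is, the D_p-projection onto a convex set is unique when it exists. -/
/-- Uniqueness of the `D_p`-projection onto a convex set: if `x₁, x₂ ∈ C` both
satisfy the Pythagorean inequality `D_p(x,y) ≥ D_p(x,xᵢ) + D_p(xᵢ,y)` for all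
`x ∈ C`, then `x₁ = x₂`. -/
theorem projection_unique
    (X : Type*) [NormedAddCommGroup X] [NormedSpace ℝ X]
    [CompleteSpace X] [UniformConvexSpace X]
    (p q : ℝ) (hp : 1 < p) (hpq : 1 / p + 1 / q = 1)
    (hnorm : ∀ x : X, x ≠ 0 → DifferentiableAt ℝ (fun y : X => ‖y‖) x)
    (T : X → (X →L[ℝ] ℝ)) (hT0 : T 0 = 0)
    (hTnorm : ∀ x : X, x ≠ 0 → ‖T x‖ = q * (‖x‖ / p) ^ (p - 1))
    (hTxx : ∀ x : X, T x x = p * q * (‖x‖ / p) ^ p)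
    (D : X → X → ℝ)
    (hD : ∀ x y : X, D x y = q * (‖x‖ / p) ^ p + p * (‖T y‖ / q) ^ q - T y x)
    (C : Set X) (hC : Convex ℝ C) (y : X)
    (x₁ x₂ : X) (hx₁ : x₁ ∈ C) (hx₂ : x₂ ∈ C)
    (h₁ : ∀ x ∈ C, D x x₁ + D x₁ y ≤ D x y)
    (h₂ : ∀ x ∈ C, D x x₂ + D x₂ y ≤ D x y) :
    x₁ = x₂ := by
  have hp0 : (0:ℝ) < p := lt_trans one_pos hp
  have hp1 : (0:ℝ) < p - 1 := by linarith
  -- basic facts about q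
  have h1q : 1 / q = (p - 1) / p := by
    have : 1 / q = 1 - 1 / p := by linarith
    rw [this]
    field_simp
  have hq0 : (0:ℝ) < q := by
    have h : 0 < 1 / q := by rw [h1q]; positivity
    exact one_div_pos.mp h
  have hpqmul : (p - 1) * q = p := by
    have h' := h1q
    field_simp at h'
    linarith
  have hpq_sum : p + q = p * q := by nlinarith [hpqmul]
  -- norm of T v, valid for all v
  have hTn : ∀ v : X, ‖T v‖ = q * (‖v‖ / p) ^ (p - 1) := by
    intro v
    by_cases hv : v = 0
    · subst hv
      simp [hT0, Real.zero_rpow (ne_of_gt hp1)]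
    · exact hTnorm v hv
  -- helper: t^p = t^(p-1) * t for t ≥ 0
  have hpow : ∀ t : ℝ, 0 ≤ t → t ^ p = t ^ (p - 1) * t := by
    intro t ht
    rcases eq_or_lt_of_le ht with h | h
    · rw [← h, Real.zero_rpow (ne_of_gt hp0), Real.zero_rpow (ne_of_gt hp1), zero_mul]
    · rw [show p = (p - 1) + 1 by ring, Real.rpow_add_one (ne_of_gt h)]
      ring_nf
  -- D simplification
  have hD' : ∀ u v : X, D u v = q * (‖u‖ / p) ^ p + p * (‖v‖ / p) ^ p - T v u := by
    intro u v
    rw [hD, hTn v]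
    have hb : (0:ℝ) ≤ ‖v‖ / p := div_nonneg (norm_nonneg v) hp0.le
    rw [show q * (‖v‖ / p) ^ (p - 1) / q = (‖v‖ / p) ^ (p - 1) by field_simp]
    rw [← Real.rpow_mul hb, hpqmul]
  set a := ‖x₁‖ with ha
  set b := ‖x₂‖ with hb
  set α := a / p with hα
  set β := b / p with hβ
  have hα0 : 0 ≤ α := div_nonneg (norm_nonneg _) hp0.le
  have hβ0 : 0 ≤ β := div_nonneg (norm_nonneg _) hp0.le
  set A := α ^ (p - 1) with hA
  set B := β ^ (p - 1) with hB
  -- sum inequality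
  have hS : D x₁ x₂ + D x₂ x₁ ≤ 0 := by
    have i1 := h₁ x₂ hx₂
    have i2 := h₂ x₁ hx₁
    linarith
  -- the three nonnegative pieces
  have he₁ : T x₂ x₁ ≤ ‖T x₂‖ * a := by
    calc T x₂ x₁ ≤ |T x₂ x₁| := le_abs_self _
    _ = ‖T x₂ x₁‖ := rfl
    _ ≤ ‖T x₂‖ * ‖x₁‖ := (T x₂).le_opNorm x₁
  have he₂ : T x₁ x₂ ≤ ‖T x₁‖ * b := by
    calc T x₁ x₂ ≤ |T x₁ x₂| := le_abs_self _
    _ = ‖T x₁ x₂‖ := rfl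
    _ ≤ ‖T x₁‖ * ‖x₂‖ := (T x₁).le_opNorm x₂
  have hg : 0 ≤ (α - β) * (A - B) := by
    rcases lt_trichotomy α β with h | h | h
    · have hAB : A < B := Real.rpow_lt_rpow hα0 h hp1
      exact mul_nonneg_of_nonpos_of_nonpos (by linarith) (by linarith)
    · rw [h]; simp
    · have hAB : B < A := Real.rpow_lt_rpow hβ0 h hp1
      exact mul_nonneg (by linarith) (by linarith)
  -- decomposition of the sum
  have hdecomp : D x₁ x₂ + D x₂ x₁ =
      p * q * ((α - β) * (A - B)) + (‖T x₂‖ * a - T x₂ x₁) + (‖T x₁‖ * b - T x₁ x₂) := by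
    rw [hD' x₁ x₂, hD' x₂ x₁, hTn x₁, hTn x₂]
    rw [← ha, ← hb, ← hα, ← hβ, ← hA, ← hB]
    have e1 : α ^ p = A * α := by rw [hA]; exact hpow α hα0
    have e2 : β ^ p = B * β := by rw [hB]; exact hpow β hβ0
    have ea : a = α * p := by rw [hα]; field_simp
    have eb : b = β * p := by rw [hβ]; field_simp
    rw [e1, e2, ea, eb]
    linear_combination (A * α + B * β) * hpq_sum
  have hTx₂pos : 0 ≤ ‖T x₂‖ * a - T x₂ x₁ := by linarith
  have hTx₁pos : 0 ≤ ‖T x₁‖ * b - T x₁ x₂ := by linarith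
  have hgpq : 0 ≤ p * q * ((α - β) * (A - B)) := by positivity
  -- everything is zero
  have hgz : (α - β) * (A - B) = 0 := by
    by_contra h
    have hpos : 0 < (α - β) * (A - B) := lt_of_le_of_ne hg (Ne.symm h)
    have : 0 < p * q * ((α - β) * (A - B)) := mul_pos (mul_pos hp0 hq0) hpos
    linarith
  have hab : a = b := by
    rcases lt_trichotomy α β with h | h | h
    · have hAB : A < B := Real.rpow_lt_rpow hα0 h hp1
      have := mul_pos_of_neg_of_neg (show α - β < 0 by linarith) (show A - B < 0 by linarith)
      linarith [hgz.le, this]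
    · have h' := h
      rw [hα, hβ] at h'
      field_simp at h'
      exact h'
    · have hAB : B < A := Real.rpow_lt_rpow hβ0 h hp1
      have := mul_pos (show (0:ℝ) < α - β by linarith) (show (0:ℝ) < A - B by linarith)
      linarith [hgz.le, this]
  by_cases hx2z : x₂ = 0
  · subst hx2z
    have : a = 0 := by rw [hab, hb]; simp
    exact norm_eq_zero.mp this
  · -- x₂ ≠ 0, use strict convexity
    have hbpos : 0 < b := norm_pos_iff.mpr hx2z
    have hTnormpos : 0 < ‖T x₂‖ := by
      rw [hTn x₂, ← hb, ← hβ]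
      have h1 : 0 < β := by rw [hβ]; positivity
      have h2 : 0 < β ^ (p - 1) := Real.rpow_pos_of_pos h1 _
      positivity
    have he₁z : T x₂ x₁ = ‖T x₂‖ * a := by
      linarith [hdecomp, hS, hgpq, hTx₁pos, hTx₂pos]
    -- T x₂ x₂ = ‖T x₂‖ * b
    have hTxx2 : T x₂ x₂ = ‖T x₂‖ * b := by
      rw [hTxx x₂, hTn x₂, ← hb, ← hβ]
      have e2 : β ^ p = β ^ (p - 1) * β := hpow β hβ0
      have eb : b = β * p := by rw [hβ]; field_simp
      rw [e2, eb]; ring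
    have hsum : T x₂ (x₁ + x₂) = ‖T x₂‖ * (a + b) := by
      rw [map_add, he₁z, hTxx2]; ring
    have hle : ‖T x₂‖ * (a + b) ≤ ‖T x₂‖ * ‖x₁ + x₂‖ := by
      rw [← hsum]
      calc T x₂ (x₁ + x₂) ≤ |T x₂ (x₁ + x₂)| := le_abs_self _
      _ = ‖T x₂ (x₁ + x₂)‖ := rfl
      _ ≤ ‖T x₂‖ * ‖x₁ + x₂‖ := (T x₂).le_opNorm _
    have hnormadd : ‖x₁ + x₂‖ = ‖x₁‖ + ‖x₂‖ := by
      have h1 : a + b ≤ ‖x₁ + x₂‖ := le_of_mul_le_mul_left hle hTnormpos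
      have h2 : ‖x₁ + x₂‖ ≤ ‖x₁‖ + ‖x₂‖ := norm_add_le _ _
      rw [← ha, ← hb]; linarith
    exact eq_of_norm_eq_of_norm_add_eq hab hnormadd
end

section
/- Let X be a uniformly convex real Banach space and let x, y be points on the sphere of radius p > 0 (‖x‖ = ‖y‖ = p). If D_p(x,y) < 2·p·q·δ(ε/p), where δ is the modulus of convexity of X and 1/p + 1/q = 1, then ‖x − y‖ < p·ε. -/
/-- On the sphere of radius `p` in a uniformly convex space with modulus of
convexity `δ`: if `D_p(x,y) < 2·p·q·δ(ε/p)` then `‖x − y‖ < p·ε`. -/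
theorem sphere_divergence_estimate
    (X : Type*) [NormedAddCommGroup X] [NormedSpace ℝ X]
    [CompleteSpace X] [UniformConvexSpace X]
    (p q : ℝ) (hp : 1 < p) (hpq : 1 / p + 1 / q = 1)
    (hnorm : ∀ x : X, x ≠ 0 → DifferentiableAt ℝ (fun y : X => ‖y‖) x)
    (T : X → (X →L[ℝ] ℝ)) (hT0 : T 0 = 0)
    (hTnorm : ∀ x : X, x ≠ 0 → ‖T x‖ = q * (‖x‖ / p) ^ (p - 1))
    (hTxx : ∀ x : X, T x x = p * q * (‖x‖ / p) ^ p)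
    (D : X → X → ℝ)
    (hD : ∀ x y : X, D x y = q * (‖x‖ / p) ^ p + p * (‖T y‖ / q) ^ q - T y x)
    (δ : ℝ → ℝ) (hδpos : ∀ ε : ℝ, 0 < ε → ε ≤ 2 → 0 < δ ε)
    (hδ : ∀ ε : ℝ, 0 < ε → ε ≤ 2 → ∀ u v : X, ‖u‖ ≤ 1 → ‖v‖ ≤ 1 →
      ε ≤ ‖u - v‖ → ‖(1 / 2 : ℝ) • (u + v)‖ ≤ 1 - δ ε)
    (x y : X) (hx : ‖x‖ = p) (hy : ‖y‖ = p)
    (ε : ℝ) (hε : 0 < ε) (hε2 : ε / p ≤ 2)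
    (hDxy : D x y < 2 * p * q * δ (ε / p)) :
    ‖x - y‖ < p * ε := by

  have hp0 : (0:ℝ) < p := lt_trans one_pos hp
  have h1p : 1 / p < 1 := by rw [div_lt_one hp0]; exact hp
  have hq0 : 0 < q := by
    have : 0 < 1 / q := by linarith
    exact (one_div_pos).mp this
  have hpq' : p + q = p * q := by
    field_simp at hpq; linarith
  have hy0 : y ≠ 0 := by
    intro h; rw [h, norm_zero] at hy; linarith
  have hpp : ‖y‖ / p = 1 := by rw [hy, div_self hp0.ne']
  have hTy : ‖T y‖ = q := by
    rw [hTnorm y hy0, hpp, Real.one_rpow, mul_one]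
  have hTyy : T y y = p * q := by
    rw [hTxx, hpp, Real.one_rpow, mul_one]
  have hDval : D x y = 2 * p * q - T y (x + y) := by
    rw [hD, hx, hTy, div_self hp0.ne', div_self hq0.ne', Real.one_rpow,
      Real.one_rpow, map_add, hTyy]
    ring_nf
    linarith [hpq']
  have hbound : 2 * p * q - D x y ≤ q * ‖x + y‖ := by
    have := (T y).le_opNorm (x + y)
    rw [hTy] at this
    have habs : T y (x + y) ≤ q * ‖x + y‖ := le_trans (le_abs_self _) this
    linarith
  by_contra hge
  push_neg at hge
  set u := p⁻¹ • x with hu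
  set v := p⁻¹ • y with hv
  have hup : (0:ℝ) < p⁻¹ := inv_pos.mpr hp0
  have hnu : ‖u‖ ≤ 1 := by
    rw [hu, norm_smul, Real.norm_eq_abs, abs_of_pos hup, hx, inv_mul_cancel₀ hp0.ne']
  have hnv : ‖v‖ ≤ 1 := by
    rw [hv, norm_smul, Real.norm_eq_abs, abs_of_pos hup, hy, inv_mul_cancel₀ hp0.ne']
  have huv : ε / p ≤ ‖u - v‖ := by
    rw [hu, hv, ← smul_sub, norm_smul, Real.norm_eq_abs, abs_of_pos hup]
    rw [div_le_iff₀ hp0, mul_comm, ← mul_assoc]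
    have : p * p⁻¹ = 1 := mul_inv_cancel₀ hp0.ne'
    rw [this, one_mul]
    nlinarith [hge, hε, hp]
  have key := hδ (ε / p) (div_pos hε hp0) hε2 u v hnu hnv huv
  have hmid : ‖(1 / 2 : ℝ) • (u + v)‖ = (1 / 2) * p⁻¹ * ‖x + y‖ := by
    rw [hu, hv, ← smul_add, smul_smul, norm_smul, Real.norm_eq_abs,
      abs_of_pos (by positivity : (0:ℝ) < (1/2) * p⁻¹)]
  rw [hmid] at key
  have hδp : 0 < δ (ε / p) := hδpos _ (div_pos hε hp0) hε2
  have hxy : ‖x + y‖ ≤ 2 * p * (1 - δ (ε / p)) := by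
    have := mul_le_mul_of_nonneg_left key (by linarith : (0:ℝ) ≤ 2 * p)
    calc ‖x + y‖ = 2 * p * ((1/2) * p⁻¹ * ‖x + y‖) := by
          field_simp
    _ ≤ 2 * p * (1 - δ (ε / p)) := this
  have hmul : q * ‖x + y‖ ≤ q * (2 * p * (1 - δ (ε / p))) :=
    mul_le_mul_of_nonneg_left hxy hq0.le
  have hexp : q * (2 * p * (1 - δ (ε / p))) = 2 * p * q - 2 * p * q * δ (ε / p) := by
    ring
  linarith
end
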